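/- arXiv:1611.06724 — 3 statements merged into one kernel-verified Lean document; each statement's English description precedes it below -/
import Mathlib

section
/- Let a, b be positive vectors in ℝ^q with a_k = b_k + n_k for nonnegative integers n_k, k = 1,…,q. Then the entire function φ(z) = qFq(a; b; z) = Σ_{m≥0} (a)_m/((b)_m m!) z^m is a polynomial multiple of e^z: precisely, φ(z) = e^z · P(z) for some polynomial P with real coefficients, and all zeros of φ are real and negative. -/
/-!
Write `θ = z d/dz`. Since `(b + n)_m / (b)_m = (b + m)_n / (b)_n`, the `m`-th Taylor coefficient
of `φ` is, up to a positive constant, `g(m) / m!` with `g(m) = ∏_k ∏_{j < n_k} (m + b_k + j)`; so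
`φ = c · g(θ) e^z`. As `(θ + β)(e^z p) = e^z (z (p' + p) + β p)`, this is `e^z P(z)` for a
polynomial `P` obtained from `1` by the maps `p ↦ z (p' + p) + β p`.

For `β > 0` such a map preserves "`deg p` distinct roots, all negative": up to the positive factor
`(-x)^(β - 1) e^x` it is minus the derivative of `(-x)^β e^x p(x)`, which vanishes at `0`, at the
roots of `p` and at `-∞`. Rolle's theorem gives a root between consecutive zeros and one to the
left of all of them, `deg p + 1` in total.
-/

open Finset

/-- `qFq(a; b; z)` as an entire function on `ℂ` with real parameters. -/
noncomputable def qFqC (q : ℕ) (a b : ℕ → ℝ) (z : ℂ) : ℂ :=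
  ∑' m : ℕ, ((∏ k ∈ Finset.range q, (ascPochhammer ℝ m).eval (a k)) /
      ((∏ k ∈ Finset.range q, (ascPochhammer ℝ m).eval (b k)) * m.factorial) : ℝ) * z ^ m

open Polynomial Filter Topology Set
open scoped Nat

theorem ascPochhammer_eval_add_mul_eval {R : Type*} [CommSemiring R] (x : R) (n m : ℕ) :
    (ascPochhammer R m).eval (x + n) * (ascPochhammer R n).eval x =
      (ascPochhammer R m).eval x * (ascPochhammer R n).eval (x + m) := by
  have h₁ := congrArg (eval x) (ascPochhammer_mul R n m)
  have h₂ := congrArg (eval x) (ascPochhammer_mul R m n)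
  simp only [eval_mul, eval_comp, eval_add, eval_X, eval_natCast] at h₁ h₂
  rw [mul_comm, h₁, h₂, add_comm]

theorem exists_hasDerivAt_eq_zero_of_tendsto_atBot {f f' : ℝ → ℝ} {b : ℝ} (hf : Continuous f)
    (hff' : ∀ x < b, HasDerivAt f (f' x) x) (hbot : Tendsto f atBot (𝓝 (f b))) :
    ∃ x < b, f' x = 0 := by
  have hlog_lt {t : ℝ} (ht : t ∈ Ioo (0 : ℝ) 1) : b + Real.log t < b :=
    add_lt_of_neg_right _ (Real.log_neg ht.1 ht.2)
  -- `t ↦ b + log t` maps `(0, 1)` onto `(-∞, b)`, which reduces this to Rolle on `(0, 1)`.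
  obtain ⟨t, ht, hzero⟩ := exists_hasDerivAt_eq_zero' (f := fun t => f (b + Real.log t))
    (f' := fun t => f' (b + Real.log t) * t⁻¹) zero_lt_one
    (hbot.comp ((tendsto_atBot_add_const_left _ b tendsto_id).comp Real.tendsto_log_nhdsGT_zero))
    (by
      have hcont : ContinuousAt (fun t => f (b + Real.log t)) 1 :=
        hf.continuousAt.comp (continuousAt_const.add (Real.continuousAt_log one_ne_zero))
      simpa using hcont.tendsto.mono_left nhdsWithin_le_nhds)
    fun t ht => (hff' _ (hlog_lt ht)).comp t ((Real.hasDerivAt_log ht.1.ne').const_add b)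
  exact ⟨_, hlog_lt ht, (mul_eq_zero.1 hzero).resolve_right (inv_ne_zero ht.1.ne')⟩

theorem PowerSeries.coeff_X_mul_derivative {R : Type*} [CommSemiring R] (f : PowerSeries R)
    (n : ℕ) : coeff n (X * derivative R f) = n * coeff n f := by
  cases n with
  | zero => simp
  | succ n => rw [coeff_succ_X_mul, coeff_derivative]; push_cast; ring

noncomputable def eulerOp (β : ℝ) (p : ℝ[X]) : ℝ[X] := X * (derivative p + p) + C β * p

noncomputable def eulerPochhammerOp (b : ℝ) : ℕ → ℝ[X] → ℝ[X]
  | 0, p => p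
  | n + 1, p => eulerOp (b + n) (eulerPochhammerOp b n p)

noncomputable def hypergeomPoly (b : ℕ → ℝ) (n : ℕ → ℕ) : ℕ → ℝ[X]
  | 0 => 1
  | q + 1 => eulerPochhammerOp (b q) (n q) (hypergeomPoly b n q)

section Coefficients

open PowerSeries

theorem tsum_coeff_exp_mul_mul_pow (p : ℝ[X]) (z : ℂ) :
    ∑' m, ((coeff m (exp ℝ * (p : PowerSeries ℝ)) : ℝ) : ℂ) * z ^ m =
      Complex.exp z * (p.map (algebraMap ℝ ℂ)).eval z := by
  have hexp : Summable fun i => ‖z ^ i / (i ! : ℂ)‖ := by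
    simpa [norm_pow] using Real.summable_pow_div_factorial ‖z‖
  have hp_zero : ∀ j ∉ range (p.natDegree + 1), (p.coeff j : ℂ) * z ^ j = 0 := by
    intro j hj
    rw [coeff_eq_zero_of_natDegree_lt (by simpa using hj)]
    simp
  have hp : Summable fun j => ‖(p.coeff j : ℂ) * z ^ j‖ :=
    summable_of_ne_finset_zero (s := range (p.natDegree + 1)) fun j hj => by simp [hp_zero j hj]
  have heval : (p.map (algebraMap ℝ ℂ)).eval z = ∑' j, (p.coeff j : ℂ) * z ^ j := by
    rw [tsum_eq_sum hp_zero, eval_eq_sum_range' (Nat.lt_succ_of_le natDegree_map_le)]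
    simp
  rw [Complex.exp_eq_exp_ℂ, NormedSpace.exp_eq_tsum_div, heval,
    tsum_mul_tsum_eq_tsum_sum_antidiagonal_of_summable_norm hexp hp]
  refine tsum_congr fun m => ?_
  rw [PowerSeries.coeff_mul, Complex.ofReal_sum, Finset.sum_mul]
  refine Finset.sum_congr rfl fun ij hij => ?_
  rw [← mem_antidiagonal.1 hij, coeff_exp, Polynomial.coeff_coe]
  simp only [one_div, map_inv₀, map_natCast, Complex.ofReal_mul, Complex.ofReal_inv,
    Complex.ofReal_natCast]
  ring

theorem coeff_exp_mul_eulerOp (β : ℝ) (p : ℝ[X]) (m : ℕ) :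
    coeff m (exp ℝ * (eulerOp β p : PowerSeries ℝ)) =
      (m + β) * coeff m (exp ℝ * (p : PowerSeries ℝ)) := by
  have key : exp ℝ * (eulerOp β p : PowerSeries ℝ) =
      PowerSeries.X * d⁄dX ℝ (exp ℝ * (p : PowerSeries ℝ)) +
        PowerSeries.C β * (exp ℝ * (p : PowerSeries ℝ)) := by
    simp only [eulerOp, Polynomial.coe_add, Polynomial.coe_mul, Polynomial.coe_X,
      Polynomial.coe_C, ← derivative_coe, Derivation.leibniz, derivative_exp, smul_eq_mul]
    ring
  rw [key, map_add, coeff_X_mul_derivative, PowerSeries.coeff_C_mul]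
  ring

theorem coeff_exp_mul_eulerPochhammerOp (b : ℝ) (n : ℕ) (p : ℝ[X]) (m : ℕ) :
    coeff m (exp ℝ * (eulerPochhammerOp b n p : PowerSeries ℝ)) =
      (ascPochhammer ℝ n).eval (b + m) * coeff m (exp ℝ * (p : PowerSeries ℝ)) := by
  induction n with
  | zero => simp [eulerPochhammerOp]
  | succ n ih =>
    rw [eulerPochhammerOp, coeff_exp_mul_eulerOp, ih, ascPochhammer_succ_eval]
    ring

theorem coeff_exp_mul_hypergeomPoly (b : ℕ → ℝ) (n : ℕ → ℕ) (q m : ℕ) :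
    coeff m (exp ℝ * (hypergeomPoly b n q : PowerSeries ℝ)) =
      (∏ k ∈ range q, (ascPochhammer ℝ (n k)).eval (b k + m)) / m ! := by
  induction q with
  | zero => simp [hypergeomPoly, coeff_exp]
  | succ q ih =>
    rw [hypergeomPoly, coeff_exp_mul_eulerPochhammerOp, ih, prod_range_succ]
    ring

theorem prod_ascPochhammer_div_eq_mul_coeff_exp_mul_hypergeomPoly (q : ℕ) (a b : ℕ → ℝ)
    (hb : ∀ k < q, 0 < b k) (n : ℕ → ℕ) (hab : ∀ k < q, a k = b k + n k) (m : ℕ) :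
    (∏ k ∈ range q, (ascPochhammer ℝ m).eval (a k)) /
        ((∏ k ∈ range q, (ascPochhammer ℝ m).eval (b k)) * m !) =
      (∏ k ∈ range q, (ascPochhammer ℝ (n k)).eval (b k))⁻¹ *
        coeff m (exp ℝ * (hypergeomPoly b n q : PowerSeries ℝ)) := by
  have hprod : (∏ k ∈ range q, (ascPochhammer ℝ m).eval (a k)) *
        ∏ k ∈ range q, (ascPochhammer ℝ (n k)).eval (b k) =
      (∏ k ∈ range q, (ascPochhammer ℝ m).eval (b k)) *
        ∏ k ∈ range q, (ascPochhammer ℝ (n k)).eval (b k + m) := by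
    rw [← prod_mul_distrib, ← prod_mul_distrib]
    refine prod_congr rfl fun k hk => ?_
    rw [hab k (mem_range.1 hk), ascPochhammer_eval_add_mul_eval]
  have hpos (l : ℕ → ℕ) : 0 < ∏ k ∈ range q, (ascPochhammer ℝ (l k)).eval (b k) :=
    prod_pos fun k hk => ascPochhammer_pos _ _ (hb k (mem_range.1 hk))
  have hB := hpos fun _ => m
  have hD := hpos n
  rw [coeff_exp_mul_hypergeomPoly]
  field_simp
  linear_combination hprod

end Coefficients

theorem natDegree_eulerOp_le (β : ℝ) (p : ℝ[X]) :
    (eulerOp β p).natDegree ≤ p.natDegree + 1 := by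
  refine natDegree_add_le_of_degree_le ?_ ((natDegree_C_mul_le β p).trans (Nat.le_succ _))
  refine natDegree_mul_le.trans ?_
  rw [natDegree_X, add_comm]
  exact Nat.succ_le_succ (natDegree_add_le_of_degree_le
    ((natDegree_derivative_le p).trans (Nat.sub_le _ _)) le_rfl)

theorem coeff_eulerOp_natDegree_succ (β : ℝ) (p : ℝ[X]) :
    (eulerOp β p).coeff (p.natDegree + 1) = p.leadingCoeff := by
  simp [eulerOp, coeff_derivative, coeff_X_mul]

theorem natDegree_eulerOp (β : ℝ) {p : ℝ[X]} (hp : p ≠ 0) :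
    (eulerOp β p).natDegree = p.natDegree + 1 :=
  natDegree_eq_of_le_of_coeff_ne_zero (natDegree_eulerOp_le β p)
    (by rwa [coeff_eulerOp_natDegree_succ, leadingCoeff_ne_zero])

theorem eulerOp_ne_zero (β : ℝ) {p : ℝ[X]} (hp : p ≠ 0) : eulerOp β p ≠ 0 := fun h =>
  hp (leadingCoeff_eq_zero.1 (by rw [← coeff_eulerOp_natDegree_succ β p, h, coeff_zero]))

noncomputable def weightedEval (β : ℝ) (p : ℝ[X]) (x : ℝ) : ℝ :=
  (-x) ^ β * (Real.exp x * p.eval x)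

theorem continuous_weightedEval {β : ℝ} (hβ : 0 ≤ β) (p : ℝ[X]) :
    Continuous (weightedEval β p) :=
  ((Real.continuous_rpow_const hβ).comp continuous_neg).mul
    (Real.continuous_exp.mul p.continuous)

theorem hasDerivAt_weightedEval (β : ℝ) (p : ℝ[X]) {x : ℝ} (hx : x < 0) :
    HasDerivAt (weightedEval β p)
      (-((-x) ^ (β - 1) * Real.exp x) * (eulerOp β p).eval x) x := by
  have hx' : 0 < -x := neg_pos.2 hx
  have hpow : HasDerivAt (fun y : ℝ => (-y) ^ β) (β * (-x) ^ (β - 1) * -1) x :=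
    (Real.hasDerivAt_rpow_const (Or.inl hx'.ne')).comp x (hasDerivAt_neg x)
  refine (hpow.mul ((Real.hasDerivAt_exp x).mul (p.hasDerivAt x))).congr_deriv ?_
  have hsplit : (-x) ^ β = (-x) ^ (β - 1) * -x := by
    rw [← Real.rpow_add_one hx'.ne', sub_add_cancel]
  simp only [eulerOp, eval_add, eval_mul, eval_X, eval_C, Pi.mul_apply, hsplit]
  ring

theorem weightedEval_zero {β : ℝ} (hβ : 0 < β) (p : ℝ[X]) : weightedEval β p 0 = 0 := by
  simp [weightedEval, Real.zero_rpow hβ.ne']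

theorem weightedEval_of_isRoot (β : ℝ) {p : ℝ[X]} {x : ℝ} (hx : p.IsRoot x) :
    weightedEval β p x = 0 := by
  simp [weightedEval, hx.eq_zero]

theorem tendsto_weightedEval_atBot (β : ℝ) (p : ℝ[X]) :
    Tendsto (weightedEval β p) atBot (𝓝 0) := by
  have hdeg : p.degree ≤ ((-X : ℝ[X]) ^ p.natDegree).degree := by
    rw [degree_pow, degree_neg, degree_X, nsmul_one]
    exact degree_le_natDegree
  have hbigO := (Asymptotics.isBigO_refl (fun x : ℝ => (-x) ^ β * Real.exp x) atBot).mul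
    (isBigO_atBot_of_degree_le _ _ hdeg)
  refine hbigO.trans_tendsto ?_ |>.congr fun x => by simp [weightedEval, mul_assoc]
  refine ((tendsto_rpow_mul_exp_neg_mul_atTop_nhds_zero (β + p.natDegree) 1 one_pos).comp
    tendsto_neg_atBot_atTop).congr' ?_
  filter_upwards [eventually_lt_atBot 0] with x hx
  simp only [Function.comp_apply, neg_neg, neg_mul, one_mul, Real.rpow_add (neg_pos.2 hx),
    Real.rpow_natCast, eval_pow, eval_neg, eval_X]
  ring

theorem isRoot_eulerOp_of_hasDerivAt_weightedEval {β : ℝ} {p : ℝ[X]} {x : ℝ} (hx : x < 0)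
    (h : -((-x) ^ (β - 1) * Real.exp x) * (eulerOp β p).eval x = 0) :
    (eulerOp β p).IsRoot x :=
  (mul_eq_zero.1 h).resolve_left
    (neg_ne_zero.2 (mul_pos (Real.rpow_pos_of_pos (neg_pos.2 hx) _) (Real.exp_pos x)).ne')

theorem exists_isRoot_eulerOp_mem_Ioo {β : ℝ} (hβ : 0 < β) {p : ℝ[X]} {a b : ℝ} (hab : a < b)
    (hb : b ≤ 0) (ha₀ : weightedEval β p a = 0) (hb₀ : weightedEval β p b = 0) :
    ∃ z ∈ Ioo a b, (eulerOp β p).IsRoot z := by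
  obtain ⟨z, hz, hderiv⟩ := exists_hasDerivAt_eq_zero hab
    (continuous_weightedEval hβ.le p).continuousOn (ha₀.trans hb₀.symm)
    fun x hx => hasDerivAt_weightedEval β p (hx.2.trans_le hb)
  exact ⟨z, hz, isRoot_eulerOp_of_hasDerivAt_weightedEval (hz.2.trans_le hb) hderiv⟩

theorem exists_isRoot_eulerOp_lt {β : ℝ} (hβ : 0 < β) {p : ℝ[X]} {b : ℝ} (hb : b ≤ 0)
    (hb₀ : weightedEval β p b = 0) : ∃ z < b, (eulerOp β p).IsRoot z := by
  obtain ⟨z, hz, hderiv⟩ := exists_hasDerivAt_eq_zero_of_tendsto_atBot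
    (continuous_weightedEval hβ.le p) (fun x hx => hasDerivAt_weightedEval β p (hx.trans_le hb))
    (hb₀ ▸ tendsto_weightedEval_atBot β p)
  exact ⟨z, hz, isRoot_eulerOp_of_hasDerivAt_weightedEval (hz.trans_le hb) hderiv⟩

def HasSimpleNegRoots (p : ℝ[X]) : Prop :=
  p ≠ 0 ∧ p.roots.toFinset.card = p.natDegree ∧ ∀ x ∈ p.roots, x < 0

namespace HasSimpleNegRoots

theorem eulerOp {p : ℝ[X]} (hp : HasSimpleNegRoots p) {β : ℝ} (hβ : 0 < β) :
    HasSimpleNegRoots (_root_.eulerOp β p) := by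
  obtain ⟨hp₀, hcard, hneg⟩ := hp
  set T := _root_.eulerOp β p
  have hT₀ : T ≠ 0 := eulerOp_ne_zero β hp₀
  have hdeg : T.natDegree = p.natDegree + 1 := natDegree_eulerOp β hp₀
  set s := insert 0 p.roots.toFinset
  have hs_card : s.card = p.natDegree + 1 := by
    rw [card_insert_of_notMem fun h => (hneg 0 (Multiset.mem_toFinset.1 h)).false, hcard]
  have hs : ∀ x ∈ s, weightedEval β p x = 0 ∧ x ≤ 0 := by
    intro x hx
    rcases mem_insert.1 hx with rfl | hx
    · exact ⟨weightedEval_zero hβ p, le_rfl⟩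
    · rw [Multiset.mem_toFinset] at hx
      exact ⟨weightedEval_of_isRoot β (isRoot_of_mem_roots hx), (hneg x hx).le⟩
  have hx₁ := hs _ (s.min'_mem ⟨0, mem_insert_self _ _⟩)
  set x₁ := s.min' ⟨0, mem_insert_self _ _⟩
  set t := T.roots.toFinset.filter (· ∈ Ioo x₁ 0)
  have ht : s.card ≤ t.card + 1 := card_le_of_interleaved fun x hx y hy hxy _ => by
    obtain ⟨z, hz, hroot⟩ :=
      exists_isRoot_eulerOp_mem_Ioo hβ hxy (hs y hy).2 (hs x hx).1 (hs y hy).1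
    refine ⟨z, mem_filter.2 ⟨Multiset.mem_toFinset.2 ((mem_roots hT₀).2 hroot), ?_, ?_⟩, hz⟩
    · exact (s.min'_le x hx).trans_lt hz.1
    · exact hz.2.trans_le (hs y hy).2
  obtain ⟨z₀, hz₀, hroot₀⟩ := exists_isRoot_eulerOp_lt hβ hx₁.2 hx₁.1
  have hz₀t : z₀ ∉ t := fun h => (mem_filter.1 h).2.1.not_gt hz₀
  have hsub : insert z₀ t ⊆ T.roots.toFinset :=
    insert_subset (Multiset.mem_toFinset.2 ((mem_roots hT₀).2 hroot₀)) (filter_subset _ _)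
  have hle : T.roots.toFinset.card ≤ T.natDegree :=
    (Multiset.toFinset_card_le _).trans (card_roots' _)
  have hle_s : T.roots.toFinset.card ≤ s.card := hle.trans (hdeg.trans hs_card.symm).le
  have heq : insert z₀ t = T.roots.toFinset := eq_of_subset_of_card_le hsub
    (by rw [card_insert_of_notMem hz₀t]; exact hle_s.trans ht)
  have hcard_T : T.roots.toFinset.card = T.natDegree := le_antisymm hle
    (by rw [hdeg, ← hs_card, ← heq, card_insert_of_notMem hz₀t]; exact ht)
  refine ⟨hT₀, hcard_T, fun x hx => ?_⟩
  rcases mem_insert.1 (heq ▸ Multiset.mem_toFinset.2 hx) with rfl | hxt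
  · exact hz₀.trans_le hx₁.2
  · exact (mem_filter.1 hxt).2.2

theorem eulerPochhammerOp {p : ℝ[X]} (hp : HasSimpleNegRoots p) {b : ℝ} (hb : 0 < b) (n : ℕ) :
    HasSimpleNegRoots (_root_.eulerPochhammerOp b n p) := by
  induction n with
  | zero => exact hp
  | succ n ih => exact ih.eulerOp (add_pos_of_pos_of_nonneg hb n.cast_nonneg)

theorem C_mul {p : ℝ[X]} (hp : HasSimpleNegRoots p) {c : ℝ} (hc : c ≠ 0) :
    HasSimpleNegRoots (C c * p) := by
  obtain ⟨hp₀, hcard, hneg⟩ := hp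
  rw [HasSimpleNegRoots, roots_C_mul p hc, natDegree_C_mul hc]
  exact ⟨mul_ne_zero (C_ne_zero.2 hc) hp₀, hcard, hneg⟩

theorem exists_neg_eq_ofReal_of_eval_map {p : ℝ[X]} (hp : HasSimpleNegRoots p) {z : ℂ}
    (hz : (p.map (algebraMap ℝ ℂ)).eval z = 0) : ∃ x : ℝ, x < 0 ∧ z = x := by
  obtain ⟨hp₀, hcard, hneg⟩ := hp
  have hsplit : Multiset.card p.roots = p.natDegree :=
    (card_roots' p).antisymm (hcard ▸ Multiset.toFinset_card_le _)
  have hz_mem := (mem_roots (Polynomial.map_ne_zero hp₀)).2 hz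
  rw [← roots_map_of_injective_of_card_eq_natDegree (algebraMap ℝ ℂ).injective hsplit,
    Multiset.mem_map] at hz_mem
  obtain ⟨x, hx, rfl⟩ := hz_mem
  exact ⟨x, hneg x hx, rfl⟩

end HasSimpleNegRoots

theorem hasSimpleNegRoots_hypergeomPoly {q : ℕ} {b : ℕ → ℝ} (hb : ∀ k < q, 0 < b k)
    (n : ℕ → ℕ) : HasSimpleNegRoots (hypergeomPoly b n q) := by
  induction q with
  | zero => simp [HasSimpleNegRoots, hypergeomPoly]
  | succ q ih =>
    exact (ih fun k hk => hb k (hk.trans q.lt_succ_self)).eulerPochhammerOp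
      (hb q q.lt_succ_self) (n q)

theorem stmt_13 (q : ℕ) (a b : ℕ → ℝ) (hb : ∀ k < q, 0 < b k)
    (n : ℕ → ℕ) (hab : ∀ k < q, a k = b k + n k) :
    ∃ P : Polynomial ℝ,
      (∀ z : ℂ, qFqC q a b z = Complex.exp z * (P.map (algebraMap ℝ ℂ)).eval z) ∧
      ∀ z : ℂ, qFqC q a b z = 0 → ∃ x : ℝ, x < 0 ∧ z = (x : ℂ) := by
  set D := ∏ k ∈ range q, (ascPochhammer ℝ (n k)).eval (b k)
  have hD : D ≠ 0 := (prod_pos fun k hk => ascPochhammer_pos _ _ (hb k (mem_range.1 hk))).ne'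
  set P := C D⁻¹ * hypergeomPoly b n q
  have hφ (z : ℂ) : qFqC q a b z = Complex.exp z * (P.map (algebraMap ℝ ℂ)).eval z := by
    simp_rw [qFqC, prod_ascPochhammer_div_eq_mul_coeff_exp_mul_hypergeomPoly q a b hb n hab,
      Complex.ofReal_mul, mul_assoc, tsum_mul_left, tsum_coeff_exp_mul_mul_pow, P,
      Polynomial.map_mul, map_C, eval_mul, eval_C]
    simp only [Complex.coe_algebraMap]
    ring
  refine ⟨P, hφ, fun z hz => ?_⟩
  rw [hφ, mul_eq_zero] at hz
  have hP : HasSimpleNegRoots P := (hasSimpleNegRoots_hypergeomPoly hb n).C_mul (inv_ne_zero hD)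
  exact hP.exists_neg_eq_ofReal_of_eval_map (hz.resolve_left (Complex.exp_ne_zero z))
end

section
/- Let M(μ) = ∫₀^1 t^{μ−1} w(t) dt where w ≥ 0 on (0,1) and M(0) < ∞. Then for all μ ≥ 0 and α, β > 0: 0 ≤ M(μ)M(μ+α+β) − M(μ+α)M(μ+β) ≤ (1/4) M(μ)². -/
/-!
Write `ρ t = t ^ (μ - 1) w t`, `f t = t ^ α`, `g t = t ^ β`, so that the four moments are
`I = ∫ ρ`, `A = ∫ f ρ`, `B = ∫ g ρ`, `C = ∫ f g ρ`. Since `f` and `g` are both increasing,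
Chebyshev's integral inequality gives `A B ≤ I C`. Since `0 ≤ f, g ≤ 1` on `(0,1)`, we have
`0 ≤ A, B` and `C ≤ min A B`; if, say, `A ≤ B`, then
`I C - A B ≤ A (I - B) ≤ A (I - A) ≤ I ^ 2 / 4`.
-/

open MeasureTheory Set Real

section WeightedChebyshev

variable {X : Type*} [MeasurableSpace X] {μ : Measure X} {ρ f g : X → ℝ}

lemma integral_linear_combination_four {P Q R T : X → ℝ} (hP : Integrable P μ)
    (hQ : Integrable Q μ) (hR : Integrable R μ) (hT : Integrable T μ) (a b c d : ℝ) :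
    ∫ x, (a * P x - b * Q x - c * R x + d * T x) ∂μ =
      a * ∫ x, P x ∂μ - b * ∫ x, Q x ∂μ - c * ∫ x, R x ∂μ + d * ∫ x, T x ∂μ := by
  have h₁ : Integrable (fun x => a * P x - b * Q x) μ := (hP.const_mul a).sub (hQ.const_mul b)
  have h₂ : Integrable (fun x => a * P x - b * Q x - c * R x) μ := h₁.sub (hR.const_mul c)
  rw [integral_add h₂ (hT.const_mul d), integral_sub h₁ (hR.const_mul c),
    integral_sub (hP.const_mul a) (hQ.const_mul b), integral_const_mul, integral_const_mul,
    integral_const_mul, integral_const_mul]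

theorem MonovaryOn.integral_mul_integral_le {s : Set X} (hfg : MonovaryOn f g s)
    (hs : ∀ᵐ x ∂μ, x ∈ s) (hρ0 : ∀ᵐ x ∂μ, 0 ≤ ρ x) (hρ : Integrable ρ μ)
    (hfρ : Integrable (fun x => f x * ρ x) μ) (hgρ : Integrable (fun x => g x * ρ x) μ)
    (hfgρ : Integrable (fun x => f x * g x * ρ x) μ) :
    (∫ x, f x * ρ x ∂μ) * (∫ x, g x * ρ x ∂μ) ≤ (∫ x, ρ x ∂μ) * ∫ x, f x * g x * ρ x ∂μ := by
  set I := ∫ x, ρ x ∂μ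
  set A := ∫ x, f x * ρ x ∂μ
  set B := ∫ x, g x * ρ x ∂μ
  set C := ∫ x, f x * g x * ρ x ∂μ
  -- The double integral of `(f x - f y) (g x - g y) ρ x ρ y` is `2 (I C - A B)`.
  have inner (y : X) : ∫ x, (f x - f y) * (g x - g y) * ρ x ∂μ =
      C - g y * A - f y * B + f y * g y * I := calc
    _ = ∫ x, (1 * (f x * g x * ρ x) - g y * (f x * ρ x) - f y * (g x * ρ x)
          + f y * g y * ρ x) ∂μ := by congr 1; ext x; ring
    _ = _ := by rw [integral_linear_combination_four hfgρ hfρ hgρ hρ, one_mul]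
  have outer : ∫ y, ρ y * (C - g y * A - f y * B + f y * g y * I) ∂μ = 2 * (I * C - A * B) :=
    calc
    _ = ∫ y, (C * ρ y - A * (g y * ρ y) - B * (f y * ρ y) + I * (f y * g y * ρ y)) ∂μ := by
      congr 1; ext y; ring
    _ = _ := by rw [integral_linear_combination_four hρ hgρ hfρ hfgρ]; ring
  have outer_nonneg : 0 ≤ ∫ y, ρ y * (C - g y * A - f y * B + f y * g y * I) ∂μ := by
    refine integral_nonneg_of_ae ?_
    filter_upwards [hs, hρ0] with y hy hρy
    rw [← inner y]
    refine mul_nonneg hρy (integral_nonneg_of_ae ?_)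
    filter_upwards [hs, hρ0] with x hx hρx
    exact mul_nonneg (hfg.sub_mul_sub_nonneg hy hx) hρx
  linarith

lemma mul_sub_mul_le_one_div_four_mul_sq {I A B C : ℝ} (hI : 0 ≤ I) (hA : 0 ≤ A) (hB : 0 ≤ B)
    (hCA : C ≤ A) (hCB : C ≤ B) : I * C - A * B ≤ 1 / 4 * I ^ 2 := by
  rcases le_total A B with h | h
  · nlinarith [sq_nonneg (I - 2 * A), mul_le_mul_of_nonneg_left hCA hI]
  · nlinarith [sq_nonneg (I - 2 * B), mul_le_mul_of_nonneg_left hCB hI]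

theorem integral_mul_sub_integral_mul_le (hρ0 : ∀ᵐ x ∂μ, 0 ≤ ρ x)
    (hf01 : ∀ᵐ x ∂μ, f x ∈ Icc 0 1) (hg01 : ∀ᵐ x ∂μ, g x ∈ Icc 0 1)
    (hfρ : Integrable (fun x => f x * ρ x) μ) (hgρ : Integrable (fun x => g x * ρ x) μ)
    (hfgρ : Integrable (fun x => f x * g x * ρ x) μ) :
    (∫ x, ρ x ∂μ) * (∫ x, f x * g x * ρ x ∂μ) - (∫ x, f x * ρ x ∂μ) * (∫ x, g x * ρ x ∂μ) ≤
      1 / 4 * (∫ x, ρ x ∂μ) ^ 2 := by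
  refine mul_sub_mul_le_one_div_four_mul_sq (integral_nonneg_of_ae hρ0) ?_ ?_ ?_ ?_
  · exact integral_nonneg_of_ae <| by
      filter_upwards [hf01, hρ0] with x hfx hρx using mul_nonneg hfx.1 hρx
  · exact integral_nonneg_of_ae <| by
      filter_upwards [hg01, hρ0] with x hgx hρx using mul_nonneg hgx.1 hρx
  · refine integral_mono_ae hfgρ hfρ ?_
    filter_upwards [hf01, hg01, hρ0] with x hfx hgx hρx
    nlinarith [mul_le_mul_of_nonneg_right hgx.2 (mul_nonneg hfx.1 hρx)]
  · refine integral_mono_ae hfgρ hgρ ?_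
    filter_upwards [hf01, hg01, hρ0] with x hfx hgx hρx
    nlinarith [mul_le_mul_of_nonneg_right hfx.2 (mul_nonneg hgx.1 hρx)]

lemma MeasureTheory.Integrable.mul_of_mem_unitInterval (hρ : Integrable ρ μ)
    (hf : AEStronglyMeasurable f μ) (hf01 : ∀ᵐ x ∂μ, f x ∈ Icc 0 1) :
    Integrable (fun x => f x * ρ x) μ :=
  hρ.bdd_mul hf (c := 1) (by
    filter_upwards [hf01] with x hx using (norm_of_nonneg hx.1).trans_le hx.2)

theorem MonovaryOn.integral_mul_sub_integral_mul_mem_Icc {s : Set X} (hfg : MonovaryOn f g s)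
    (hs : ∀ᵐ x ∂μ, x ∈ s) (hρ0 : ∀ᵐ x ∂μ, 0 ≤ ρ x) (hρ : Integrable ρ μ)
    (hf : AEStronglyMeasurable f μ) (hg : AEStronglyMeasurable g μ)
    (hf01 : ∀ᵐ x ∂μ, f x ∈ Icc 0 1) (hg01 : ∀ᵐ x ∂μ, g x ∈ Icc 0 1) :
    0 ≤ (∫ x, ρ x ∂μ) * (∫ x, f x * g x * ρ x ∂μ) - (∫ x, f x * ρ x ∂μ) * (∫ x, g x * ρ x ∂μ) ∧
    (∫ x, ρ x ∂μ) * (∫ x, f x * g x * ρ x ∂μ) - (∫ x, f x * ρ x ∂μ) * (∫ x, g x * ρ x ∂μ) ≤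
      1 / 4 * (∫ x, ρ x ∂μ) ^ 2 := by
  have hfρ := hρ.mul_of_mem_unitInterval hf hf01
  have hgρ := hρ.mul_of_mem_unitInterval hg hg01
  have hfgρ : Integrable (fun x => f x * g x * ρ x) μ := by
    simpa only [mul_assoc] using hgρ.mul_of_mem_unitInterval hf hf01
  exact ⟨sub_nonneg.2 (hfg.integral_mul_integral_le hs hρ0 hρ hfρ hgρ hfgρ),
    integral_mul_sub_integral_mul_le hρ0 hf01 hg01 hfρ hgρ hfgρ⟩

end WeightedChebyshev

lemma rpow_sub_one_mul_eq {t : ℝ} (ht : 0 < t) {a b c : ℝ} (h : a = b + c) (w : ℝ) :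
    t ^ (a - 1) * w = t ^ b * (t ^ (c - 1) * w) := by
  rw [← mul_assoc, ← rpow_add ht, h, add_sub_assoc]

lemma rpow_mem_Icc_of_mem_Ioo {t : ℝ} (ht : t ∈ Ioo 0 1) {γ : ℝ} (hγ : 0 ≤ γ) :
    t ^ γ ∈ Icc 0 1 :=
  ⟨rpow_nonneg ht.1.le γ, rpow_le_one ht.1.le ht.2.le hγ⟩

lemma integrableOn_rpow_sub_one_mul {w : ℝ → ℝ}
    (hM0 : IntegrableOn (fun t => t ^ ((0 : ℝ) - 1) * w t) (Ioo 0 1)) {γ : ℝ} (hγ : 0 ≤ γ) :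
    IntegrableOn (fun t => t ^ (γ - 1) * w t) (Ioo 0 1) := by
  refine IntegrableOn.congr_fun (Integrable.mul_of_mem_unitInterval hM0 (f := fun t => t ^ γ)
    (measurable_id.pow_const γ).aestronglyMeasurable ?_)
    (fun t ht => (rpow_sub_one_mul_eq ht.1 (add_zero γ).symm _).symm) measurableSet_Ioo
  filter_upwards [ae_restrict_mem measurableSet_Ioo] with t ht using rpow_mem_Icc_of_mem_Ioo ht hγ

theorem stmt_15 (w : ℝ → ℝ) (hw : ∀ t ∈ Set.Ioo (0 : ℝ) 1, 0 ≤ w t)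
    (hM0 : IntegrableOn (fun t => t ^ ((0 : ℝ) - 1) * w t) (Set.Ioo (0 : ℝ) 1)) :
    ∀ μ α β : ℝ, 0 ≤ μ → 0 < α → 0 < β →
      0 ≤ (∫ t in Set.Ioo (0 : ℝ) 1, t ^ (μ - 1) * w t) *
            (∫ t in Set.Ioo (0 : ℝ) 1, t ^ (μ + α + β - 1) * w t) -
          (∫ t in Set.Ioo (0 : ℝ) 1, t ^ (μ + α - 1) * w t) *
            (∫ t in Set.Ioo (0 : ℝ) 1, t ^ (μ + β - 1) * w t) ∧
      (∫ t in Set.Ioo (0 : ℝ) 1, t ^ (μ - 1) * w t) *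
            (∫ t in Set.Ioo (0 : ℝ) 1, t ^ (μ + α + β - 1) * w t) -
          (∫ t in Set.Ioo (0 : ℝ) 1, t ^ (μ + α - 1) * w t) *
            (∫ t in Set.Ioo (0 : ℝ) 1, t ^ (μ + β - 1) * w t) ≤
        (1 / 4) * (∫ t in Set.Ioo (0 : ℝ) 1, t ^ (μ - 1) * w t) ^ 2 := by
  intro μ α β hμ hα hβ
  have hS : MeasurableSet (Ioo (0 : ℝ) 1) := measurableSet_Ioo
  have hmem : ∀ᵐ t ∂volume.restrict (Ioo (0 : ℝ) 1), t ∈ Ioo 0 1 := ae_restrict_mem hS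
  have shift (γ δ : ℝ) : ∫ t in Ioo 0 1, t ^ (γ + δ - 1) * w t =
      ∫ t in Ioo 0 1, t ^ δ * (t ^ (γ - 1) * w t) :=
    setIntegral_congr_fun hS fun t ht => rpow_sub_one_mul_eq ht.1 (add_comm γ δ) _
  have shift₂ : ∫ t in Ioo 0 1, t ^ (μ + α + β - 1) * w t =
      ∫ t in Ioo 0 1, t ^ α * t ^ β * (t ^ (μ - 1) * w t) :=
    setIntegral_congr_fun hS fun t ht => by
      rw [rpow_sub_one_mul_eq ht.1 (by ring : μ + α + β = α + (μ + β)),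
        rpow_sub_one_mul_eq ht.1 (add_comm μ β), mul_assoc]
  have hmono (γ : ℝ) (hγ : 0 ≤ γ) : MonotoneOn (fun t : ℝ => t ^ γ) (Ioo 0 1) :=
    (monotoneOn_rpow_Ici_of_exponent_nonneg hγ).mono fun t ht => le_of_lt ht.1
  rw [shift μ α, shift μ β, shift₂]
  refine ((hmono α hα.le).monovaryOn (hmono β hβ.le)).integral_mul_sub_integral_mul_mem_Icc hmem
    ?_ (integrableOn_rpow_sub_one_mul hM0 hμ) (measurable_id.pow_const α).aestronglyMeasurable
    (measurable_id.pow_const β).aestronglyMeasurable ?_ ?_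
  · filter_upwards [hmem] with t ht using mul_nonneg (rpow_nonneg ht.1.le _) (hw t ht)
  · filter_upwards [hmem] with t ht using rpow_mem_Icc_of_mem_Ioo ht hα.le
  · filter_upwards [hmem] with t ht using rpow_mem_Icc_of_mem_Ioo ht hβ.le
end

section
/- Let a_1,…,a_p and b_1,…,b_p be positive reals such that, after sorting both lists increasingly, Σ_{i=1}^{k} a_i ≤ Σ_{i=1}^{k} b_i for every k = 1,…,p (weak supermajorization b ≺^W a). Then the Müntz polynomial v(t) = Σ_{k=1}^{p} (t^{a_k} − t^{b_k}) is nonnegative on [0,1]. -/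
/-! For `0 < t ≤ 1` the convexity of `x ↦ t ^ x` gives the tangent-line bound
`t ^ a - t ^ b ≥ t ^ b log t · (a - b)`. The weights `-t ^ b_k log t` are nonnegative and
decrease with `k` because `b` is sorted, while the partial sums of `a - b` are nonpositive, so
Abel summation shows that the sum of these lower bounds is nonnegative. -/

open Finset Real

theorem Finset.sum_range_mul_nonpos_of_antitoneOn {p : ℕ} {w d : ℕ → ℝ}
    (hw₀ : ∀ k < p, 0 ≤ w k) (hw : AntitoneOn w (Set.Iio p))
    (hd : ∀ k ≤ p, ∑ i ∈ range k, d i ≤ 0) :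
    ∑ k ∈ range p, w k * d k ≤ 0 := by
  rcases Nat.eq_zero_or_pos p with rfl | hp
  · simp
  have parts := sum_range_by_parts w d p
  simp only [smul_eq_mul] at parts
  rw [parts]
  have last : w (p - 1) * ∑ i ∈ range p, d i ≤ 0 :=
    mul_nonpos_of_nonneg_of_nonpos (hw₀ _ (by omega)) (hd p le_rfl)
  have increments : 0 ≤ ∑ i ∈ range (p - 1), (w (i + 1) - w i) * ∑ j ∈ range (i + 1), d j := by
    refine sum_nonneg fun i hi => mul_nonneg_of_nonpos_of_nonpos ?_ (hd _ (by simp at hi; omega))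
    have := hw (show i ∈ Set.Iio p by simp at hi ⊢; omega)
      (show i + 1 ∈ Set.Iio p by simp at hi ⊢; omega) (Nat.le_succ i)
    linarith
  linarith

theorem Real.rpow_mul_log_mul_sub_le_rpow_sub_rpow {t : ℝ} (ht : 0 < t) (a b : ℝ) :
    t ^ b * log t * (a - b) ≤ t ^ a - t ^ b :=
  calc t ^ b * log t * (a - b) = t ^ b * ((a - b) * log t + 1) - t ^ b := by ring
    _ ≤ t ^ b * exp ((a - b) * log t) - t ^ b := by gcongr; exact add_one_le_exp _
    _ = t ^ a - t ^ b := by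
      rw [rpow_def_of_pos ht, rpow_def_of_pos ht, ← exp_add]
      ring_nf

theorem stmt_17_general (p : ℕ) (a b : ℕ → ℝ)
    (ha : ∀ k < p, 0 < a k) (hb : ∀ k < p, 0 < b k)
    (hbmono : ∀ i j, i ≤ j → j < p → b i ≤ b j)
    (hmaj : ∀ k ≤ p, ∑ i ∈ Finset.range k, a i ≤ ∑ i ∈ Finset.range k, b i) :
    ∀ t ∈ Set.Icc (0 : ℝ) 1, 0 ≤ ∑ k ∈ Finset.range p, (t ^ a k - t ^ b k) := by
  rintro t ⟨ht₀, ht₁⟩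
  rcases ht₀.eq_or_lt with rfl | ht
  · refine sum_nonneg fun k hk => ?_
    rw [mem_range] at hk
    simp [zero_rpow (ha k hk).ne', zero_rpow (hb k hk).ne']
  have hlog : log t ≤ 0 := log_nonpos ht.le ht₁
  have abel : ∑ k ∈ range p, (-(t ^ b k * log t)) * (a k - b k) ≤ 0 := by
    refine sum_range_mul_nonpos_of_antitoneOn
      (fun k _ => neg_nonneg.2 (mul_nonpos_of_nonneg_of_nonpos (rpow_nonneg ht.le _) hlog))
      (fun i hi j hj hij => ?_) (fun k hk => by simpa [sum_sub_distrib] using hmaj k hk)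
    have := rpow_le_rpow_of_exponent_ge ht ht₁ (hbmono i j hij hj)
    nlinarith
  calc 0 ≤ ∑ k ∈ range p, t ^ b k * log t * (a k - b k) := by
        simpa only [neg_mul, sum_neg_distrib, neg_nonpos] using abel
    _ ≤ _ := sum_le_sum fun k _ => rpow_mul_log_mul_sub_le_rpow_sub_rpow ht _ _

theorem stmt_17 (p : ℕ) (a b : ℕ → ℝ)
    (ha : ∀ k < p, 0 < a k) (hb : ∀ k < p, 0 < b k)
    (hamono : ∀ i j, i ≤ j → j < p → a i ≤ a j)
    (hbmono : ∀ i j, i ≤ j → j < p → b i ≤ b j)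
    (hmaj : ∀ k ≤ p, ∑ i ∈ Finset.range k, a i ≤ ∑ i ∈ Finset.range k, b i) :
    ∀ t ∈ Set.Icc (0 : ℝ) 1, 0 ≤ ∑ k ∈ Finset.range p, (t ^ a k - t ^ b k) :=
  stmt_17_general p a b ha hb hbmono hmaj
end
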